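/- Let m₁ ≥ 32/3 and m₄ > 0 be real constants, and let ν ∈ ℂ satisfy ν² = -(1/4)(m₁ - 4) (i.e. ν = (1/2)√(m₁-4)·i). Suppose f : ℝ → ℂ is twice differentiable on (0,∞) and satisfies the modified Bessel differential equation z²·f''(z) + z·f'(z) − (z² + ν²)·f(z) = 0 for all z > 0. Then the function w(t) := t⁻² · f((1/2)·m₄·t²) satisfies the temporal eigenfunction equation w''(t) + 5 t⁻¹ w'(t) + m₁ t⁻² w(t) − m₄² t² w(t) = 0 for all t > 0. -/

import Mathlib

/-!
With `a = m₄ / 2` and `z = a t²`, write `w = t⁻² u` where `u t = f (a t²)`. Conjugation by `t⁻²`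
turns `w'' + 5 t⁻¹ w'` into `t⁻² (u'' + t⁻¹ u' - 4 t⁻² u)`, and the substitution `z = a t²` turns
`t² u'' + t u'` into `4 (z² f'' + z f')`. Hence `t⁴` times the temporal operator applied to `w` is
`4 (z² f'' + z f' - f) + (m₁ - m₄² t⁴) f`, which the Bessel equation reduces to
`(4 ν² - 4 + m₁) f = 0`.
-/

open Filter Topology

section
variable {f : ℝ → ℂ} {a t : ℝ}

theorem hasDerivAt_comp_const_mul_sq (hf : DifferentiableAt ℝ f (a * t ^ 2)) :
    HasDerivAt (fun s => f (a * s ^ 2)) (2 * a * t * deriv f (a * t ^ 2)) t := by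
  have hsq : HasDerivAt (fun s : ℝ => a * s ^ 2) (2 * a * t) t := by
    simpa using ((hasDerivAt_pow 2 t).const_mul a).congr_deriv (by ring)
  exact (hf.hasDerivAt.scomp t hsq).congr_deriv (by simp [Complex.real_smul])

theorem eventually_hasDerivAt_comp_const_mul_sq
    (hf : ∀ᶠ z in 𝓝 (a * t ^ 2), DifferentiableAt ℝ f z) :
    ∀ᶠ s in 𝓝 t, HasDerivAt (fun s => f (a * s ^ 2)) (2 * a * s * deriv f (a * s ^ 2)) s :=
  (((continuous_pow 2).const_mul a).tendsto t).eventually hf |>.mono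
    fun _ hs => hasDerivAt_comp_const_mul_sq hs

theorem hasDerivAt_deriv_comp_const_mul_sq
    (hf : ∀ᶠ z in 𝓝 (a * t ^ 2), DifferentiableAt ℝ f z)
    (hf' : DifferentiableAt ℝ (deriv f) (a * t ^ 2)) :
    HasDerivAt (deriv fun s => f (a * s ^ 2))
      (2 * a * deriv f (a * t ^ 2) + 4 * a ^ 2 * t ^ 2 * deriv (deriv f) (a * t ^ 2)) t := by
  have hderiv : (deriv fun s => f (a * s ^ 2)) =ᶠ[𝓝 t]
      fun s => (2 * a * s : ℂ) * deriv f (a * s ^ 2) :=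
    (eventually_hasDerivAt_comp_const_mul_sq hf).mono fun _ hs => hs.deriv
  have hlin : HasDerivAt (fun s : ℝ => (2 * a * s : ℂ)) (2 * a) t := by
    simpa using ((hasDerivAt_id t).const_mul (2 * a)).ofReal_comp
  refine ((hlin.mul (hasDerivAt_comp_const_mul_sq hf')).congr_of_eventuallyEq hderiv).congr_deriv ?_
  ring

theorem deriv_deriv_comp_const_mul_sq_add
    (hf : ∀ᶠ z in 𝓝 (a * t ^ 2), DifferentiableAt ℝ f z)
    (hf' : DifferentiableAt ℝ (deriv f) (a * t ^ 2)) :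
    (t : ℂ) ^ 2 * deriv (deriv fun s => f (a * s ^ 2)) t
        + t * deriv (fun s => f (a * s ^ 2)) t =
      4 * (((a * t ^ 2 : ℝ) : ℂ) ^ 2 * deriv (deriv f) (a * t ^ 2)
        + (a * t ^ 2 : ℝ) * deriv f (a * t ^ 2)) := by
  rw [(hasDerivAt_deriv_comp_const_mul_sq hf hf').deriv,
    (hasDerivAt_comp_const_mul_sq hf.self_of_nhds).deriv]
  push_cast
  ring

end

theorem hasDerivAt_ofReal_pow_inv {t : ℝ} (n : ℕ) (ht : t ≠ 0) :
    HasDerivAt (fun s : ℝ => ((s : ℂ) ^ n)⁻¹) (-n * ((t : ℂ) ^ (n + 1))⁻¹) t := by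
  have ht' : (t : ℂ) ≠ 0 := Complex.ofReal_ne_zero.mpr ht
  refine (((hasDerivAt_id (t : ℂ)).pow n).inv (pow_ne_zero n ht')).comp_ofReal.congr_deriv ?_
  rcases n with _ | n
  · simp
  · simp only [Pi.pow_apply, id, Nat.add_sub_cancel, mul_one]
    field_simp
    ring

section
variable {u : ℝ → ℂ} {t : ℝ}

theorem hasDerivAt_inv_sq_mul {u' : ℂ} (ht : t ≠ 0) (hu : HasDerivAt u u' t) :
    HasDerivAt (fun s : ℝ => ((s : ℂ) ^ 2)⁻¹ * u s)
      (-2 * ((t : ℂ) ^ 3)⁻¹ * u t + ((t : ℂ) ^ 2)⁻¹ * u') t := by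
  refine ((hasDerivAt_ofReal_pow_inv 2 ht).mul hu).congr_deriv ?_
  push_cast
  ring

theorem deriv_deriv_inv_sq_mul_add (ht : t ≠ 0)
    (hu : ∀ᶠ s in 𝓝 t, DifferentiableAt ℝ u s) (hu' : DifferentiableAt ℝ (deriv u) t) :
    deriv (deriv fun s : ℝ => ((s : ℂ) ^ 2)⁻¹ * u s) t
        + 5 * (t : ℂ)⁻¹ * deriv (fun s : ℝ => ((s : ℂ) ^ 2)⁻¹ * u s) t =
      ((t : ℂ) ^ 2)⁻¹ * (deriv (deriv u) t + (t : ℂ)⁻¹ * deriv u t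
        - 4 * ((t : ℂ) ^ 2)⁻¹ * u t) := by
  have hderiv : (deriv fun s : ℝ => ((s : ℂ) ^ 2)⁻¹ * u s) =ᶠ[𝓝 t]
      fun s => -2 * ((s : ℂ) ^ 3)⁻¹ * u s + ((s : ℂ) ^ 2)⁻¹ * deriv u s := by
    filter_upwards [hu, eventually_ne_nhds ht] with s hs hs0
    exact (hasDerivAt_inv_sq_mul hs0 hs.hasDerivAt).deriv
  have hderiv' :=
    (((hasDerivAt_ofReal_pow_inv 3 ht).const_mul (-2)).mul hu.self_of_nhds.hasDerivAt).add
      ((hasDerivAt_ofReal_pow_inv 2 ht).mul hu'.hasDerivAt)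
  rw [(hderiv'.congr_of_eventuallyEq hderiv).deriv,
    (hasDerivAt_inv_sq_mul ht hu.self_of_nhds.hasDerivAt).deriv]
  have ht' : (t : ℂ) ≠ 0 := Complex.ofReal_ne_zero.mpr ht
  push_cast
  field_simp
  ring

end

theorem temporal_eigenfunction_of_modified_bessel_m2_zero_m3_neg_general
    (m₁ m₄ : ℝ) (hm₄ : 0 < m₄)
    (ν : ℂ) (hν : ν ^ 2 = -(1 / 4) * ((m₁ : ℂ) - 4))
    (f : ℝ → ℂ)
    (hf : ∀ z > (0 : ℝ), DifferentiableAt ℝ f z)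
    (hf' : ∀ z > (0 : ℝ), DifferentiableAt ℝ (deriv f) z)
    (hBessel : ∀ z > (0 : ℝ),
      (z : ℂ) ^ 2 * deriv (deriv f) z + (z : ℂ) * deriv f z
        - ((z : ℂ) ^ 2 + ν ^ 2) * f z = 0)
    (w : ℝ → ℂ)
    (hw : ∀ t : ℝ, w t = ((t : ℂ) ^ 2)⁻¹ * f ((1 / 2) * m₄ * t ^ 2)) :
    ∀ t > (0 : ℝ),
      deriv (deriv w) t + 5 * (t : ℂ)⁻¹ * deriv w t
        + (m₁ : ℂ) * ((t : ℂ) ^ 2)⁻¹ * w t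
        - (m₄ : ℂ) ^ 2 * (t : ℂ) ^ 2 * w t = 0 := by
  intro t ht
  set a : ℝ := 1 / 2 * m₄
  have hz : 0 < a * t ^ 2 := by positivity
  have hfz : ∀ᶠ z in 𝓝 (a * t ^ 2), DifferentiableAt ℝ f z := eventually_gt_nhds hz |>.mono hf
  have hu := (eventually_hasDerivAt_comp_const_mul_sq hfz).mono fun _ hs => hs.differentiableAt
  have hu' := (hasDerivAt_deriv_comp_const_mul_sq hfz (hf' _ hz)).differentiableAt
  have hradial := deriv_deriv_comp_const_mul_sq_add hfz (hf' _ hz)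
  have hB := hBessel _ hz
  rw [show w = fun s : ℝ => ((s : ℂ) ^ 2)⁻¹ * f (a * s ^ 2) from funext hw,
    deriv_deriv_inv_sq_mul_add ht.ne' hu hu']
  have ht' : (t : ℂ) ≠ 0 := Complex.ofReal_ne_zero.mpr ht.ne'
  field_simp
  push_cast [a] at hradial hB ⊢
  linear_combination hradial + 4 * hB + 4 * f (1 / 2 * m₄ * t ^ 2) * hν

/-- If `f` solves the modified Bessel equation of order `ν` with
`ν² = -(1/4)(m₁-4)` on `(0,∞)`, then `w t = t⁻² f((1/2) m₄ t²)` solves the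
temporal eigenfunction equation
`w'' + 5 t⁻¹ w' + m₁ t⁻² w − m₄² t² w = 0` on `(0,∞)`. -/
theorem temporal_eigenfunction_of_modified_bessel_m2_zero_m3_neg
    (m₁ m₄ : ℝ) (hm₁ : 32 / 3 ≤ m₁) (hm₄ : 0 < m₄)
    (ν : ℂ) (hν : ν ^ 2 = -(1 / 4) * ((m₁ : ℂ) - 4))
    (f : ℝ → ℂ)
    (hf : ∀ z > (0 : ℝ), DifferentiableAt ℝ f z)
    (hf' : ∀ z > (0 : ℝ), DifferentiableAt ℝ (deriv f) z)
    (hBessel : ∀ z > (0 : ℝ),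
      (z : ℂ) ^ 2 * deriv (deriv f) z + (z : ℂ) * deriv f z
        - ((z : ℂ) ^ 2 + ν ^ 2) * f z = 0)
    (w : ℝ → ℂ)
    (hw : ∀ t : ℝ, w t = ((t : ℂ) ^ 2)⁻¹ * f ((1 / 2) * m₄ * t ^ 2)) :
    ∀ t > (0 : ℝ),
      deriv (deriv w) t + 5 * (t : ℂ)⁻¹ * deriv w t
        + (m₁ : ℂ) * ((t : ℂ) ^ 2)⁻¹ * w t
        - (m₄ : ℂ) ^ 2 * (t : ℂ) ^ 2 * w t = 0 :=
  temporal_eigenfunction_of_modified_bessel_m2_zero_m3_neg_general m₁ m₄ hm₄ ν hν f hf hf' hBessel w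
    hw
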